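/- For every real q > 1 and every x > 0, the quantity G(x) := (1/(x+1)) · ∫₀¹ t^q (x+t)^q / (x+2t)^{q-1} dt satisfies 1/((q+2)·2^{q-1}) < G(x) < 1/(q+1). -/

import Mathlib

/-!
The integrand is `t ^ q * (x + t) * ((x + t) / (x + 2 * t)) ^ (q - 1)`, and the ratio
`(x + t) / (x + 2 * t)` lies in `[1/2, 1]`. Hence the integral lies between `J / 2 ^ (q - 1)` and
`J = ∫₀¹ t ^ q * (x + t) dt = x / (q + 1) + 1 / (q + 2)`, and `J / (x + 1)` is a proper convex
combination of `1 / (q + 1)` and `1 / (q + 2)`.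
-/

open Real MeasureTheory

theorem rpow_div_rpow_sub_one_le {a b q : ℝ} (ha : 0 < a) (hab : a ≤ b) (hq : 1 ≤ q) :
    a ^ q / b ^ (q - 1) ≤ a := by
  calc a ^ q / b ^ (q - 1) ≤ a ^ q / a ^ (q - 1) := by gcongr
    _ = a := by
        rw [rpow_sub_one ha.ne']
        field_simp

theorem div_two_rpow_le_rpow_div_rpow {a b q : ℝ} (ha : 0 < a) (hb : 0 < b) (hba : b ≤ 2 * a)
    (hq : 1 ≤ q) :
    a / 2 ^ (q - 1) ≤ a ^ q / b ^ (q - 1) := by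
  calc a / 2 ^ (q - 1) = a ^ q / (2 * a) ^ (q - 1) := by
        rw [mul_rpow zero_le_two ha.le, rpow_sub_one ha.ne']
        field_simp
    _ ≤ a ^ q / b ^ (q - 1) := by gcongr

theorem intervalIntegrable_rpow_mul_add {q : ℝ} (hq : -1 < q) (x : ℝ) :
    IntervalIntegrable (fun t : ℝ => t ^ q * (x + t)) volume 0 1 :=
  (intervalIntegral.intervalIntegrable_rpow' hq).mul_continuousOn (by fun_prop)

theorem integral_rpow_mul_add {q : ℝ} (hq : -1 < q) (x : ℝ) :
    ∫ t in (0:ℝ)..1, t ^ q * (x + t) = x / (q + 1) + 1 / (q + 2) := by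
  have hq1 : q + 1 ≠ 0 := by linarith
  have h : ∀ t ∈ Set.uIcc (0:ℝ) 1, t ^ q * (x + t) = x * t ^ q + t ^ (q + 1) := by
    intro t ht
    rw [Set.uIcc_of_le zero_le_one] at ht
    rcases ht.1.eq_or_lt with rfl | ht0
    · simp [zero_rpow hq1, mul_comm]
    · rw [rpow_add_one ht0.ne']
      ring
  rw [intervalIntegral.integral_congr h,
    intervalIntegral.integral_add ((intervalIntegral.intervalIntegrable_rpow' hq).const_mul x)
      (intervalIntegral.intervalIntegrable_rpow' (by linarith)),
    intervalIntegral.integral_const_mul, integral_rpow (Or.inl hq),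
    integral_rpow (Or.inl (by linarith))]
  norm_num [zero_rpow hq1, zero_rpow (by linarith : q + 1 + 1 ≠ 0)]
  ring

section

variable {q x : ℝ}

theorem continuousOn_rpow_mul_rpow_div_rpow (hq : 1 ≤ q) (hx : 0 < x) :
    ContinuousOn (fun t : ℝ => t ^ q * (x + t) ^ q / (x + 2 * t) ^ (q - 1)) (Set.Icc 0 1) := by
  have hpow : ∀ {p : ℝ}, 0 ≤ p → ∀ {f : ℝ → ℝ}, Continuous f →
      Continuous fun t => f t ^ p :=
    fun hp _ hf => hf.rpow_const fun _ => Or.inr hp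
  refine .div (Continuous.continuousOn ?_) (Continuous.continuousOn ?_) fun t ht => ?_
  · exact (hpow (by linarith) continuous_id).mul (hpow (by linarith) (by fun_prop))
  · exact hpow (by linarith) (by fun_prop)
  · exact (rpow_pos_of_pos (by linarith [ht.1]) _).ne'

theorem intervalIntegrable_rpow_mul_rpow_div_rpow (hq : 1 ≤ q) (hx : 0 < x) :
    IntervalIntegrable (fun t : ℝ => t ^ q * (x + t) ^ q / (x + 2 * t) ^ (q - 1)) volume 0 1 :=
  (continuousOn_rpow_mul_rpow_div_rpow hq hx).intervalIntegrable_of_Icc zero_le_one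

theorem integral_rpow_mul_rpow_div_rpow_le (hq : 1 ≤ q) (hx : 0 < x) :
    ∫ t in (0:ℝ)..1, t ^ q * (x + t) ^ q / (x + 2 * t) ^ (q - 1) ≤
      x / (q + 1) + 1 / (q + 2) := by
  rw [← integral_rpow_mul_add (by linarith) x]
  refine intervalIntegral.integral_mono_on zero_le_one
    (intervalIntegrable_rpow_mul_rpow_div_rpow hq hx)
    (intervalIntegrable_rpow_mul_add (by linarith) x) fun t ht => ?_
  rw [mul_div_assoc]
  exact mul_le_mul_of_nonneg_left
    (rpow_div_rpow_sub_one_le (by linarith [ht.1]) (by linarith [ht.1]) hq) (rpow_nonneg ht.1 _)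

theorem le_integral_rpow_mul_rpow_div_rpow (hq : 1 ≤ q) (hx : 0 < x) :
    (x / (q + 1) + 1 / (q + 2)) / 2 ^ (q - 1) ≤
      ∫ t in (0:ℝ)..1, t ^ q * (x + t) ^ q / (x + 2 * t) ^ (q - 1) := by
  rw [← integral_rpow_mul_add (by linarith) x, ← intervalIntegral.integral_div]
  refine intervalIntegral.integral_mono_on zero_le_one
    ((intervalIntegrable_rpow_mul_add (by linarith) x).div_const _)
    (intervalIntegrable_rpow_mul_rpow_div_rpow hq hx) fun t ht => ?_
  rw [mul_div_assoc, mul_div_assoc]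
  exact mul_le_mul_of_nonneg_left
    (div_two_rpow_le_rpow_div_rpow (by linarith [ht.1]) (by linarith [ht.1])
      (by linarith [ht.1]) hq) (rpow_nonneg ht.1 _)

theorem div_add_one_div_mem_Ioo (hx : 0 < x) (hq : -1 < q) :
    x / (q + 1) + 1 / (q + 2) ∈ Set.Ioo ((x + 1) / (q + 2)) ((x + 1) / (q + 1)) := by
  have h1 : 0 < q + 1 := by linarith
  rw [add_div, add_div]
  constructor
  · gcongr; linarith
  · gcongr; linarith

end

theorem stmt_8 (q x : ℝ) (hq : 1 < q) (hx : 0 < x) :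
    1 / ((q + 2) * 2 ^ (q - 1)) <
      (1 / (x + 1)) * (∫ t in (0:ℝ)..1, t ^ q * (x + t) ^ q / (x + 2 * t) ^ (q - 1)) ∧
    (1 / (x + 1)) * (∫ t in (0:ℝ)..1, t ^ q * (x + t) ^ q / (x + 2 * t) ^ (q - 1)) <
      1 / (q + 1) := by
  set I := ∫ t in (0:ℝ)..1, t ^ q * (x + t) ^ q / (x + 2 * t) ^ (q - 1)
  set J := x / (q + 1) + 1 / (q + 2)
  obtain ⟨hJ_lower, hJ_upper⟩ := div_add_one_div_mem_Ioo hx (by linarith : -1 < q)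
  constructor
  · calc 1 / ((q + 2) * 2 ^ (q - 1))
          = 1 / (x + 1) * ((x + 1) / (q + 2) / 2 ^ (q - 1)) := by field_simp
      _ < 1 / (x + 1) * (J / 2 ^ (q - 1)) := by gcongr
      _ ≤ 1 / (x + 1) * I := by gcongr; exact le_integral_rpow_mul_rpow_div_rpow hq.le hx
  · calc 1 / (x + 1) * I ≤ 1 / (x + 1) * J := by
          gcongr; exact integral_rpow_mul_rpow_div_rpow_le hq.le hx
      _ < 1 / (x + 1) * ((x + 1) / (q + 1)) := by gcongr
      _ = 1 / (q + 1) := by field_simp
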